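/- Population version of Proposition 2 (single bivariate normal cluster with weak correlation). Let k ≥ 2 be an integer, 0 < ρ < 1/2, and let a₁ < a₂ < … < a_k be real numbers symmetric about the origin (a_j = −a_{k+1−j} for all j). Set b₀ = −∞, b_k = +∞, and b_j = (a_j + a_{j+1})/2 for 1 ≤ j ≤ k − 1, and assume the population k-means fixed-point condition a_j = m(b_{j−1}, b_j) for all j = 1, …, k. Then Σ_{j=1}^k (Φ(ρ b_j) − Φ(ρ b_{j−1})) · a_j · ( a_j − 2 ρ · m(ρ b_{j−1}, ρ b_j) ) > 0, where ρ · (±∞) is interpreted as ±∞. (This sum equals the population-level difference CV(k) − CV(1) of cross-validation errors for a mean-zero bivariate normal pair with unit marginal variances and correlation ρ, so CV(k) > CV(1) in the limit.) -/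

import Mathlib

open MeasureTheory
open scoped BigOperators
open Set Filter
open scoped Topology

noncomputable section

/-- The standard normal density `φ(z) = (2π)^{−1/2} exp(−z²/2)`. -/
def phi (z : ℝ) : ℝ := (Real.sqrt (2 * Real.pi))⁻¹ * Real.exp (-z ^ 2 / 2)

/-- The standard normal cumulative distribution function, extended to `EReal` with the
conventions `Φ(−∞) = 0` and `Φ(+∞) = 1`. -/
def PhiE (c : EReal) : ℝ := ∫ z in {z : ℝ | (z : EReal) ≤ c}, phi z

/-- The truncated standard normal mean
`m(c, d) = (∫_c^d z φ(z) dz)/(Φ(d) − Φ(c))` for extended reals `c < d`. -/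
def mE (c d : EReal) : ℝ :=
  (∫ z in {z : ℝ | c < (z : EReal) ∧ (z : EReal) < d}, z * phi z) / (PhiE d - PhiE c)

lemma phi_pos (z : ℝ) : 0 < phi z := by
  have h2π : (0:ℝ) < 2 * Real.pi := by positivity
  exact mul_pos (inv_pos.2 (Real.sqrt_pos.2 h2π)) (Real.exp_pos _)

lemma phi_eq (z : ℝ) : phi z = (Real.sqrt (2 * Real.pi))⁻¹ * Real.exp (-(1/2) * z ^ 2) := by
  unfold phi; ring_nf

lemma continuous_phi : Continuous phi := by
  unfold phi
  exact continuous_const.mul ((continuous_pow 2).neg.div_const 2).rexp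

lemma integrable_phi : Integrable phi := by
  have := (integrable_exp_neg_mul_sq (by norm_num : (0:ℝ) < 1/2)).const_mul
    ((Real.sqrt (2 * Real.pi))⁻¹)
  refine this.congr (Filter.Eventually.of_forall fun z => ?_)
  rw [phi_eq]

lemma integrable_id_phi : Integrable (fun z => z * phi z) := by
  have := (integrable_mul_exp_neg_mul_sq (by norm_num : (0:ℝ) < 1/2)).const_mul
    ((Real.sqrt (2 * Real.pi))⁻¹)
  refine this.congr (Filter.Eventually.of_forall fun z => ?_)
  simp only [phi_eq]; ring

lemma hasDerivAt_negphi (z : ℝ) : HasDerivAt (fun x => -phi x) (z * phi z) z := by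
  have h : HasDerivAt (fun x : ℝ => -x ^ 2 / 2) (-z) z := by
    have := ((hasDerivAt_pow 2 z).neg).div_const 2
    simpa using this.congr_deriv (by ring)
  have h2 : HasDerivAt (fun x : ℝ => Real.exp (-x ^ 2 / 2)) (Real.exp (-z^2/2) * (-z)) z :=
    (Real.hasDerivAt_exp _).comp z h
  have h3 := (h2.const_mul ((Real.sqrt (2 * Real.pi))⁻¹)).neg
  refine h3.congr_deriv ?_
  unfold phi; ring

lemma tendsto_phi_atTop : Tendsto phi atTop (𝓝 0) := by
  have hsq : Tendsto (fun z : ℝ => -z^2/2) atTop atBot := by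
    have h1 : Tendsto (fun z : ℝ => z^2/2) atTop atTop :=
      (tendsto_pow_atTop two_ne_zero).atTop_div_const (by norm_num)
    have := tendsto_neg_atTop_atBot.comp h1
    simpa only [Function.comp_def, neg_div] using this
  have := (Real.tendsto_exp_atBot.comp hsq).const_mul ((Real.sqrt (2 * Real.pi))⁻¹)
  unfold phi
  simpa only [Function.comp_def, mul_zero] using this

lemma tendsto_phi_atBot : Tendsto phi atBot (𝓝 0) := by
  have hsq : Tendsto (fun z : ℝ => -z^2/2) atBot atBot := by
    have h0 : Tendsto (fun z : ℝ => z^2) atBot atTop := by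
      have h := tendsto_abs_atBot_atTop (G := ℝ)
      have := (tendsto_pow_atTop (n := 2) two_ne_zero).comp h
      simpa only [Function.comp_def, sq_abs] using this
    have h1 : Tendsto (fun z : ℝ => z^2/2) atBot atTop := h0.atTop_div_const (by norm_num)
    have := tendsto_neg_atTop_atBot.comp h1
    simpa only [Function.comp_def, neg_div] using this
  have := (Real.tendsto_exp_atBot.comp hsq).const_mul ((Real.sqrt (2 * Real.pi))⁻¹)
  unfold phi
  simpa only [Function.comp_def, mul_zero] using this

lemma integral_phi : ∫ z, phi z = 1 := by
  have h : ∫ z : ℝ, Real.exp (-(1/2) * z^2) = Real.sqrt (Real.pi / (1/2)) :=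
    integral_gaussian (1/2)
  have h2π : (0:ℝ) < 2 * Real.pi := by positivity
  calc ∫ z, phi z = ∫ z, (Real.sqrt (2 * Real.pi))⁻¹ * Real.exp (-(1/2) * z^2) := by
        simp_rw [phi_eq]
    _ = (Real.sqrt (2 * Real.pi))⁻¹ * ∫ z, Real.exp (-(1/2) * z^2) := MeasureTheory.integral_const_mul _ _
    _ = 1 := by
        rw [h]
        have : Real.pi / (1/2) = 2 * Real.pi := by ring
        rw [this, inv_mul_cancel₀ (ne_of_gt (Real.sqrt_pos.2 h2π))]

lemma PhiE_bot : PhiE ⊥ = 0 := by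
  have h : {z : ℝ | (z : EReal) ≤ ⊥} = (∅ : Set ℝ) := by
    ext z; simp
  rw [PhiE, h]; simp

lemma PhiE_top : PhiE ⊤ = 1 := by
  have h : {z : ℝ | (z : EReal) ≤ ⊤} = (univ : Set ℝ) := by
    ext z; simp
  rw [PhiE, h, Measure.restrict_univ, integral_phi]

lemma PhiE_coe (x : ℝ) : PhiE x = ∫ z in Iic x, phi z := by
  have h : {z : ℝ | (z : EReal) ≤ (x : EReal)} = Iic x := by
    ext z; simp [EReal.coe_le_coe_iff]
  rw [PhiE, h]

lemma PhiE_sub_coe (x y : ℝ) : PhiE x - PhiE y = ∫ z in y..x, phi z := by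
  rw [PhiE_coe, PhiE_coe]
  exact intervalIntegral.integral_Iic_sub_Iic integrable_phi.integrableOn integrable_phi.integrableOn

lemma PhiE_lt_coe {x y : ℝ} (h : x < y) : PhiE (x : EReal) < PhiE (y : EReal) := by
  have h1 : (0:ℝ) < ∫ z in x..y, phi z :=
    intervalIntegral.intervalIntegral_pos_of_pos
      (integrable_phi.intervalIntegrable) (fun z => phi_pos z) h
  have h2 := PhiE_sub_coe y x
  linarith

lemma PhiE_coe_pos (x : ℝ) : 0 < PhiE (x : EReal) := by
  rw [PhiE_coe]
  rw [setIntegral_pos_iff_support_of_nonneg_ae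
    (Filter.Eventually.of_forall fun z => (phi_pos z).le) integrable_phi.integrableOn]
  have : Function.support phi = univ := by
    ext z; simp [Function.support, ne_of_gt (phi_pos z)]
  rw [this, univ_inter, Real.volume_Iic]
  simp

lemma PhiE_coe_lt_one (x : ℝ) : PhiE (x : EReal) < 1 := by
  have hIoi : 0 < ∫ z in Ioi x, phi z := by
    rw [setIntegral_pos_iff_support_of_nonneg_ae
      (Filter.Eventually.of_forall fun z => (phi_pos z).le) integrable_phi.integrableOn]
    have : Function.support phi = univ := by
      ext z; simp [Function.support, ne_of_gt (phi_pos z)]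
    rw [this, univ_inter, Real.volume_Ioi]
    simp
  have hsplit : (∫ z in Iic x, phi z) + ∫ z in Ioi x, phi z = ∫ z, phi z :=
    intervalIntegral.integral_Iic_add_Ioi integrable_phi.integrableOn integrable_phi.integrableOn
  rw [integral_phi] at hsplit
  rw [PhiE_coe]; linarith

lemma num_Iio (d : ℝ) : ∫ z in Iio d, z * phi z = -phi d := by
  rw [← integral_Iic_eq_integral_Iio]
  have := integral_Iic_of_hasDerivAt_of_tendsto' (f := fun z => -phi z)
    (f' := fun z => z * phi z) (a := d) (m := 0)
    (fun x _ => hasDerivAt_negphi x) integrable_id_phi.integrableOn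
    (by simpa using tendsto_phi_atBot.neg)
  simpa using this

lemma num_Ioi (c : ℝ) : ∫ z in Ioi c, z * phi z = phi c := by
  have := integral_Ioi_of_hasDerivAt_of_tendsto' (f := fun z => -phi z)
    (f' := fun z => z * phi z) (a := c) (m := 0)
    (fun x _ => hasDerivAt_negphi x) integrable_id_phi.integrableOn
    (by simpa using tendsto_phi_atTop.neg)
  simpa using this

lemma num_interval (c d : ℝ) : ∫ z in c..d, z * phi z = phi c - phi d := by
  rw [intervalIntegral.integral_eq_sub_of_hasDerivAt (fun x _ => hasDerivAt_negphi x)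
    (integrable_id_phi.intervalIntegrable)]
  ring

lemma num_Ioo {c d : ℝ} (h : c ≤ d) : ∫ z in Ioo c d, z * phi z = phi c - phi d := by
  rw [← integral_Ioc_eq_integral_Ioo, ← intervalIntegral.integral_of_le h, num_interval]

lemma setE_bot (d : ℝ) :
    {z : ℝ | (⊥ : EReal) < (z : EReal) ∧ (z : EReal) < (d : EReal)} = Iio d := by
  ext z; simp [EReal.bot_lt_coe, EReal.coe_lt_coe_iff]

lemma setE_top (c : ℝ) :
    {z : ℝ | (c : EReal) < (z : EReal) ∧ (z : EReal) < (⊤ : EReal)} = Ioi c := by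
  ext z; simp [EReal.coe_lt_top, EReal.coe_lt_coe_iff]

lemma setE_coe (c d : ℝ) :
    {z : ℝ | (c : EReal) < (z : EReal) ∧ (z : EReal) < (d : EReal)} = Ioo c d := by
  ext z; simp [EReal.coe_lt_coe_iff, Ioo]

lemma mE_mul {c d : EReal} (h : PhiE c < PhiE d) :
    (PhiE d - PhiE c) * mE c d
      = ∫ z in {z : ℝ | c < (z : EReal) ∧ (z : EReal) < d}, z * phi z := by
  rw [mE, mul_div_cancel₀ _ (sub_ne_zero.2 (ne_of_gt h))]

lemma step_bot (d : ℝ) :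
    PhiE ⊥ < PhiE (d : EReal) ∧
      (PhiE (d : EReal) - PhiE ⊥) * mE ⊥ (d : EReal) = 0 - phi d := by
  have h : PhiE ⊥ < PhiE (d : EReal) := by rw [PhiE_bot]; exact PhiE_coe_pos d
  refine ⟨h, ?_⟩
  rw [mE_mul h, setE_bot, num_Iio]; ring

lemma step_top (c : ℝ) :
    PhiE (c : EReal) < PhiE ⊤ ∧
      (PhiE ⊤ - PhiE (c : EReal)) * mE (c : EReal) ⊤ = phi c - 0 := by
  have h : PhiE (c : EReal) < PhiE ⊤ := by rw [PhiE_top]; exact PhiE_coe_lt_one c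
  refine ⟨h, ?_⟩
  rw [mE_mul h, setE_top, num_Ioi]; ring

lemma step_mid {c d : ℝ} (hcd : c < d) :
    PhiE (c : EReal) < PhiE (d : EReal) ∧
      (PhiE (d : EReal) - PhiE (c : EReal)) * mE (c : EReal) (d : EReal) = phi c - phi d := by
  have h := PhiE_lt_coe hcd
  exact ⟨h, by rw [mE_mul h, setE_coe, num_Ioo hcd.le]⟩

lemma phi_anti {u v : ℝ} (h : u ^ 2 ≤ v ^ 2) : phi v ≤ phi u := by
  unfold phi
  have : Real.exp (-v ^ 2 / 2) ≤ Real.exp (-u ^ 2 / 2) := by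
    apply Real.exp_le_exp.2; linarith
  have h0 : (0:ℝ) ≤ (Real.sqrt (2 * Real.pi))⁻¹ := by positivity
  exact mul_le_mul_of_nonneg_left this h0

lemma T_pos {ρ : ℝ} (hρ0 : 0 < ρ) (hρ : ρ < 1 / 2) (u : ℝ) :
    0 < 2 * u * (PhiE (u : EReal) - PhiE ((ρ * u : ℝ) : EReal))
        + phi u - 2 * ρ * phi (ρ * u) := by
  have hint : PhiE (u : EReal) - PhiE ((ρ * u : ℝ) : EReal) = ∫ z in (ρ * u)..u, phi z :=
    PhiE_sub_coe u (ρ * u)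
  have hz : ∫ z in (ρ * u)..u, z * phi z = phi (ρ * u) - phi u := num_interval _ _
  have hconst : ∫ z in (ρ * u)..u, u * phi z = u * ∫ z in (ρ * u)..u, phi z :=
    intervalIntegral.integral_const_mul _ _
  have hkey : ∫ z in (ρ * u)..u, z * phi z ≤ ∫ z in (ρ * u)..u, u * phi z := by
    rcases le_total 0 u with hu | hu
    · apply intervalIntegral.integral_mono_on (by nlinarith)
        (integrable_id_phi.intervalIntegrable) ((integrable_phi.const_mul u).intervalIntegrable)
      intro z hzm
      exact mul_le_mul_of_nonneg_right hzm.2 (phi_pos z).le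
    · have hord : u ≤ ρ * u := by nlinarith
      rw [intervalIntegral.integral_symm, intervalIntegral.integral_symm u (ρ * u)]
      apply neg_le_neg
      apply intervalIntegral.integral_mono_on hord
        ((integrable_phi.const_mul u).intervalIntegrable) (integrable_id_phi.intervalIntegrable)
      intro z hzm
      exact mul_le_mul_of_nonneg_right hzm.1 (phi_pos z).le
  have hphi : phi u ≤ phi (ρ * u) := phi_anti (by nlinarith [mul_nonneg (mul_nonneg (by linarith : (0:ℝ) ≤ 1 - ρ) (by linarith : (0:ℝ) ≤ 1 + ρ)) (sq_nonneg u)])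
  have hmain : phi (ρ * u) - phi u ≤ u * (PhiE (u : EReal) - PhiE ((ρ * u : ℝ) : EReal)) := by
    rw [hint, ← hconst, ← hz]; exact hkey
  nlinarith [phi_pos u, phi_pos (ρ * u)]

lemma abel_sum (f g : ℕ → ℝ) : ∀ n, 1 ≤ n →
    ∑ j ∈ Finset.Icc 1 n, f j * (g j - g (j - 1))
      = f n * g n - f 1 * g 0 - ∑ j ∈ Finset.Icc 1 (n - 1), (f (j + 1) - f j) * g j := by
  intro n hn
  induction n, hn using Nat.le_induction with
  | base => norm_num [mul_sub]
  | succ n hn ih =>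
    rw [Finset.sum_Icc_succ_top (by omega : 1 ≤ n + 1), ih]
    have h1 : n + 1 - 1 = n := by omega
    rw [h1]
    have h2 : n - 1 + 1 = n := by omega
    rw [← h2, Finset.sum_Icc_succ_top (by omega : 1 ≤ n - 1 + 1), h2]
    ring
noncomputable section

/-- **Population version of Proposition 2** (single bivariate normal cluster with weak
correlation).  Let `k ≥ 2`, `0 < ρ < 1/2`, and let `a₁ < … < a_k` be symmetric about the
origin, with boundaries `b₀ = −∞`, `b_j = (a_j + a_{j+1})/2`, `b_k = +∞`, satisfying the
population k-means fixed-point condition `a_j = m(b_{j−1}, b_j)`.  Then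
`Σ_{j=1}^k (Φ(ρ b_j) − Φ(ρ b_{j−1})) · a_j · (a_j − 2ρ m(ρ b_{j−1}, ρ b_j)) > 0`,
i.e. the population-level difference `CV(k) − CV(1)` is positive. -/
theorem population_cv_single_cluster (k : ℕ) (hk : 2 ≤ k)
    (ρ : ℝ) (hρ0 : 0 < ρ) (hρ : ρ < 1 / 2)
    (a : ℕ → ℝ)
    (hmono : ∀ i j, 1 ≤ i → i < j → j ≤ k → a i < a j)
    (hsym : ∀ j, 1 ≤ j → j ≤ k → a j = -a (k + 1 - j))
    (b : ℕ → EReal)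
    (hb0 : b 0 = ⊥) (hbk : b k = ⊤)
    (hbmid : ∀ j, 1 ≤ j → j ≤ k - 1 → b j = (((a j + a (j + 1)) / 2 : ℝ) : EReal))
    (hfix : ∀ j, 1 ≤ j → j ≤ k → a j = mE (b (j - 1)) (b j)) :
    0 < ∑ j ∈ Finset.Icc 1 k,
        (PhiE ((ρ : EReal) * b j) - PhiE ((ρ : EReal) * b (j - 1)))
          * (a j * (a j - 2 * ρ * mE ((ρ : EReal) * b (j - 1)) ((ρ : EReal) * b j))) := by
  have hkpos : 1 ≤ k := by omega
  have hk1 : 1 ≤ k - 1 := by omega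
  set Hmf : ℕ → ℝ :=
    fun j => if 1 ≤ j ∧ j ≤ k - 1 then phi (ρ * ((a j + a (j + 1)) / 2)) else 0 with hHmf
  set H1f : ℕ → ℝ :=
    fun j => if 1 ≤ j ∧ j ≤ k - 1 then phi ((a j + a (j + 1)) / 2) else 0 with hH1f
  set Gf : ℕ → ℝ := fun j => PhiE ((ρ : EReal) * b j) with hGf
  set G1f : ℕ → ℝ := fun j => PhiE (b j) with hG1f
  have hGfj : ∀ j, Gf j = PhiE ((ρ : EReal) * b j) := fun j => congrFun hGf j
  have hG1fj : ∀ j, G1f j = PhiE (b j) := fun j => congrFun hG1f j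
  have hHmfj : ∀ j, Hmf j
      = if 1 ≤ j ∧ j ≤ k - 1 then phi (ρ * ((a j + a (j + 1)) / 2)) else 0 :=
    fun j => congrFun hHmf j
  have hH1fj : ∀ j, H1f j
      = if 1 ≤ j ∧ j ≤ k - 1 then phi ((a j + a (j + 1)) / 2) else 0 :=
    fun j => congrFun hH1f j
  have hGf0 : Gf 0 = 0 := by
    rw [hGfj, hb0, EReal.coe_mul_bot_of_pos hρ0, PhiE_bot]
  have hGfk : Gf k = 1 := by
    rw [hGfj, hbk, EReal.coe_mul_top_of_pos hρ0, PhiE_top]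
  have hG1f0 : G1f 0 = 0 := by rw [hG1fj, hb0, PhiE_bot]
  have hG1fk : G1f k = 1 := by rw [hG1fj, hbk, PhiE_top]
  have hHmf0 : Hmf 0 = 0 := by rw [hHmfj, if_neg (by omega)]
  have hHmfk : Hmf k = 0 := by rw [hHmfj, if_neg (by omega)]
  have hH1f0 : H1f 0 = 0 := by rw [hH1fj, if_neg (by omega)]
  have hH1fk : H1f k = 0 := by rw [hH1fj, if_neg (by omega)]
  have hbρ : ∀ j, 1 ≤ j → j ≤ k - 1 →
      (ρ : EReal) * b j = ((ρ * ((a j + a (j + 1)) / 2) : ℝ) : EReal) := by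
    intro j h1 h2
    rw [hbmid j h1 h2, ← EReal.coe_mul]
  have h10 : (1 : ℕ) - 1 = 0 := by norm_num
  -- claim 1 : per-term identity for the scaled boundaries
  have claim1 : ∀ j, 1 ≤ j → j ≤ k →
      (Gf j - Gf (j - 1)) * mE ((ρ : EReal) * b (j - 1)) ((ρ : EReal) * b j)
        = Hmf (j - 1) - Hmf j := by
    intro j h1 hkj
    by_cases hj1 : j = 1
    · subst hj1
      rw [h10, hGfj 1, hGfj 0, hbρ 1 le_rfl hk1]
      rw [hb0, EReal.coe_mul_bot_of_pos hρ0]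
      obtain ⟨hlt, hmul⟩ := step_bot (ρ * ((a 1 + a (1 + 1)) / 2))
      rw [hmul, hHmfj 0, if_neg (by omega), hHmfj 1, if_pos ⟨le_rfl, hk1⟩]
    · by_cases hjk : j = k
      · subst hjk
        rw [hGfj j, hGfj (j - 1), hbρ (j - 1) hk1 le_rfl]
        rw [hbk, EReal.coe_mul_top_of_pos hρ0]
        obtain ⟨hlt, hmul⟩ := step_top (ρ * ((a (j - 1) + a (j - 1 + 1)) / 2))
        rw [hmul, hHmfj (j - 1), if_pos ⟨hk1, le_rfl⟩, hHmfj j, if_neg (by omega)]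
      · have hA : 1 ≤ j - 1 := by omega
        have hB : j - 1 ≤ k - 1 := by omega
        have hC : j ≤ k - 1 := by omega
        have e : j - 1 + 1 = j := by omega
        have hbl := hbρ (j - 1) hA hB
        rw [e] at hbl
        have hbr := hbρ j h1 hC
        have g1 : a (j - 1) < a j := hmono (j - 1) j hA (by omega) (by omega)
        have g2 : a j < a (j + 1) := hmono j (j + 1) h1 (by omega) (by omega)
        have hlt : ρ * ((a (j - 1) + a j) / 2) < ρ * ((a j + a (j + 1)) / 2) := by
          apply mul_lt_mul_of_pos_left _ hρ0
          linarith
        obtain ⟨hltP, hmul⟩ := step_mid hlt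
        rw [hGfj j, hGfj (j - 1), hbl, hbr, hmul]
        rw [hHmfj (j - 1), if_pos ⟨hA, hB⟩, hHmfj j, if_pos ⟨h1, hC⟩, e]
  -- claim 2 : per-term identity from the fixed-point condition
  have claim2 : ∀ j, 1 ≤ j → j ≤ k →
      a j * (G1f j - G1f (j - 1)) = H1f (j - 1) - H1f j := by
    intro j h1 hkj
    rw [hfix j h1 hkj, mul_comm]
    by_cases hj1 : j = 1
    · subst hj1
      rw [h10, hG1fj 1, hG1fj 0, hbmid 1 le_rfl hk1, hb0]
      obtain ⟨hlt, hmul⟩ := step_bot ((a 1 + a (1 + 1)) / 2)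
      rw [hmul, hH1fj 0, if_neg (by omega), hH1fj 1, if_pos ⟨le_rfl, hk1⟩]
    · by_cases hjk : j = k
      · subst hjk
        rw [hG1fj j, hG1fj (j - 1), hbmid (j - 1) hk1 le_rfl, hbk]
        obtain ⟨hlt, hmul⟩ := step_top ((a (j - 1) + a (j - 1 + 1)) / 2)
        rw [hmul, hH1fj (j - 1), if_pos ⟨hk1, le_rfl⟩, hH1fj j, if_neg (by omega)]
      · have hA : 1 ≤ j - 1 := by omega
        have hB : j - 1 ≤ k - 1 := by omega
        have hC : j ≤ k - 1 := by omega
        have e : j - 1 + 1 = j := by omega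
        have hbl := hbmid (j - 1) hA hB
        rw [e] at hbl
        have hbr := hbmid j h1 hC
        have g1 : a (j - 1) < a j := hmono (j - 1) j hA (by omega) (by omega)
        have g2 : a j < a (j + 1) := hmono j (j + 1) h1 (by omega) (by omega)
        have hlt : (a (j - 1) + a j) / 2 < (a j + a (j + 1)) / 2 := by linarith
        obtain ⟨hltP, hmul⟩ := step_mid hlt
        rw [hG1fj j, hG1fj (j - 1), hbl, hbr, hmul]
        rw [hH1fj (j - 1), if_pos ⟨hA, hB⟩, hH1fj j, if_pos ⟨h1, hC⟩, e]
  -- rewrite the goal sum termwise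
  have hsum_goal : ∑ j ∈ Finset.Icc 1 k,
        (PhiE ((ρ : EReal) * b j) - PhiE ((ρ : EReal) * b (j - 1)))
          * (a j * (a j - 2 * ρ * mE ((ρ : EReal) * b (j - 1)) ((ρ : EReal) * b j)))
      = ∑ j ∈ Finset.Icc 1 k,
          (a j ^ 2 * (Gf j - Gf (j - 1)) - 2 * ρ * (a j * (Hmf (j - 1) - Hmf j))) := by
    refine Finset.sum_congr rfl fun j hj => ?_
    rw [Finset.mem_Icc] at hj
    have hmul := claim1 j hj.1 hj.2
    rw [← hGfj j, ← hGfj (j - 1), ← hmul]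
    ring
  -- Abel summation for the two sums
  have habel1 : ∑ j ∈ Finset.Icc 1 k, a j ^ 2 * (Gf j - Gf (j - 1))
      = a k ^ 2 - ∑ j ∈ Finset.Icc 1 (k - 1), (a (j + 1) ^ 2 - a j ^ 2) * Gf j := by
    have h := abel_sum (fun j => a j ^ 2) Gf k hkpos
    rw [hGfk, hGf0] at h
    rw [h]; ring
  have hsum2 : ∑ j ∈ Finset.Icc 1 k, a j * (Hmf (j - 1) - Hmf j)
      = ∑ j ∈ Finset.Icc 1 (k - 1), (a (j + 1) - a j) * Hmf j := by
    have h := abel_sum a Hmf k hkpos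
    rw [hHmfk, hHmf0] at h
    have h2 : ∑ j ∈ Finset.Icc 1 k, a j * (Hmf (j - 1) - Hmf j)
        = -∑ j ∈ Finset.Icc 1 k, a j * (Hmf j - Hmf (j - 1)) := by
      rw [← Finset.sum_neg_distrib]
      exact Finset.sum_congr rfl fun j _ => by ring
    rw [h2, h]; ring
  -- fixed point: closed form for a k ^ 2
  have hE : a k ^ 2 = ∑ j ∈ Finset.Icc 1 (k - 1),
      ((a (j + 1) ^ 2 - a j ^ 2) * G1f j + (a (j + 1) - a j) * H1f j) := by
    have hL : ∑ j ∈ Finset.Icc 1 k, a j ^ 2 * (G1f j - G1f (j - 1))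
        = a k ^ 2 - ∑ j ∈ Finset.Icc 1 (k - 1), (a (j + 1) ^ 2 - a j ^ 2) * G1f j := by
      have h := abel_sum (fun j => a j ^ 2) G1f k hkpos
      rw [hG1fk, hG1f0] at h
      rw [h]; ring
    have hR : ∑ j ∈ Finset.Icc 1 k, a j * (H1f (j - 1) - H1f j)
        = ∑ j ∈ Finset.Icc 1 (k - 1), (a (j + 1) - a j) * H1f j := by
      have h := abel_sum a H1f k hkpos
      rw [hH1fk, hH1f0] at h
      have h2 : ∑ j ∈ Finset.Icc 1 k, a j * (H1f (j - 1) - H1f j)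
          = -∑ j ∈ Finset.Icc 1 k, a j * (H1f j - H1f (j - 1)) := by
        rw [← Finset.sum_neg_distrib]
        exact Finset.sum_congr rfl fun j _ => by ring
      rw [h2, h]; ring
    have hLR : ∑ j ∈ Finset.Icc 1 k, a j ^ 2 * (G1f j - G1f (j - 1))
        = ∑ j ∈ Finset.Icc 1 k, a j * (H1f (j - 1) - H1f j) := by
      refine Finset.sum_congr rfl fun j hj => ?_
      rw [Finset.mem_Icc] at hj
      rw [← claim2 j hj.1 hj.2]
      ring
    rw [hL, hR] at hLR
    rw [Finset.sum_add_distrib]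
    linarith
  rw [hsum_goal, Finset.sum_sub_distrib, ← Finset.mul_sum, habel1, hsum2, hE,
    ← Finset.sum_sub_distrib, Finset.mul_sum, ← Finset.sum_sub_distrib]
  apply Finset.sum_pos _ (Finset.nonempty_Icc.2 hk1)
  intro j hj
  rw [Finset.mem_Icc] at hj
  have h1 := hj.1
  have h2 := hj.2
  rw [hGfj j, hbρ j h1 h2, hG1fj j, hbmid j h1 h2, hHmfj j, if_pos ⟨h1, h2⟩,
    hH1fj j, if_pos ⟨h1, h2⟩]
  have hΔ : 0 < a (j + 1) - a j := sub_pos.2 (hmono j (j + 1) h1 (by omega) (by omega))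
  have hT := T_pos hρ0 hρ ((a j + a (j + 1)) / 2)
  nlinarith [mul_pos hΔ hT]
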